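/- The enhanced power graph of the symmetric group S₈ contains an induced 5-cycle on the permutations (1 2 3 4 5), (6 7 8), (1 2), (3 4 5), (6 7), and hence is not a perfect graph. -/

import Mathlib

def powerGraph (G : Type*) [Group G] : SimpleGraph G where
  Adj x y := x ≠ y ∧ ((∃ n : ℤ, n ≠ 0 ∧ y = x ^ n) ∨ ∃ n : ℤ, n ≠ 0 ∧ x = y ^ n)
  symm := ⟨fun _ _ ⟨h, h2⟩ => ⟨h.symm, h2.symm⟩⟩
  loopless := ⟨fun _ ⟨h, _⟩ => h rfl⟩

def enhancedPowerGraph (G : Type*) [Group G] : SimpleGraph G where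
  Adj x y := x ≠ y ∧ ∃ z : G, x ∈ Subgroup.zpowers z ∧ y ∈ Subgroup.zpowers z
  symm := ⟨fun _ _ ⟨h, z, hx, hy⟩ => ⟨h.symm, z, hy, hx⟩⟩
  loopless := ⟨fun _ ⟨h, _⟩ => h rfl⟩


def SimpleGraph.IsPerfect {V : Type*} (G : SimpleGraph V) : Prop :=
  ∀ s : Set V, (G.induce s).chromaticNumber = ((G.induce s).cliqueNum : ℕ∞)

/-!
Commuting elements `x`, `y` of coprime orders both lie in `⟨x * y⟩`; this gives the five edges
of the pentagon. Three of its chords join non-commuting permutations. The other two join elements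
`x`, `y` of the same order with `y ∉ ⟨x⟩`: a finite cyclic group has at most `n` elements killed
by `n`, so all its elements of a given order generate the same subgroup, and `x`, `y` cannot lie
in a common cyclic subgroup. An induced pentagon is triangle-free but not 2-colourable, so its
vertex set has clique number 2 and chromatic number 3.
-/

open Subgroup

theorem Commute.mem_zpowers_mul_left_of_coprime {G : Type*} [Group G] {x y : G}
    (h : Commute x y) (hco : (orderOf x).Coprime (orderOf y)) : x ∈ zpowers (x * y) := by
  obtain ⟨m, hm⟩ := exists_pow_eq_self_of_coprime hco.symm
  have hpow : (x * y) ^ orderOf y = x ^ orderOf y := by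
    rw [h.mul_pow, pow_orderOf_eq_one, mul_one]
  exact mem_zpowers_iff.mpr ⟨(orderOf y * m : ℕ), by rw [zpow_natCast, pow_mul, hpow, hm]⟩

theorem IsCyclic.mem_zpowers_of_orderOf_eq {H : Type*} [Group H] [Finite H] [IsCyclic H]
    {a b : H} (h : orderOf a = orderOf b) : b ∈ zpowers a := by
  classical
  have := Fintype.ofFinite H
  have hsub : (zpowers a : Set H).toFinset ⊆ Finset.univ.filter (fun c => c ^ orderOf a = 1) := by
    intro c hc
    simp only [Set.mem_toFinset, SetLike.mem_coe] at hc
    simpa [orderOf_dvd_iff_pow_eq_one] using orderOf_dvd_of_mem_zpowers hc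
  have heq := Finset.eq_of_subset_of_card_le hsub <| by
    rw [Set.toFinset_card, Fintype.card_eq_nat_card, SetLike.coe_sort_coe, Nat.card_zpowers]
    exact IsCyclic.card_pow_eq_one_le (orderOf_pos a)
  have hb : b ∈ Finset.univ.filter (fun c => c ^ orderOf a = 1) := by
    simp [h, pow_orderOf_eq_one]
  simpa [← heq] using hb

namespace enhancedPowerGraph

variable {G : Type*} [Group G] {x y : G}

theorem commute_of_adj (h : (enhancedPowerGraph G).Adj x y) : Commute x y := by
  obtain ⟨-, z, hx, hy⟩ := h
  obtain ⟨m, rfl⟩ := mem_zpowers_iff.mp hx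
  obtain ⟨n, rfl⟩ := mem_zpowers_iff.mp hy
  exact (Commute.refl z).zpow_zpow m n

theorem adj_of_coprime (hne : x ≠ y) (h : Commute x y)
    (hco : (orderOf x).Coprime (orderOf y)) : (enhancedPowerGraph G).Adj x y :=
  ⟨hne, x * y, h.mem_zpowers_mul_left_of_coprime hco,
    h.eq ▸ h.symm.mem_zpowers_mul_left_of_coprime hco.symm⟩

theorem mem_zpowers_of_adj_of_orderOf_eq [Finite G] (h : (enhancedPowerGraph G).Adj x y)
    (hxy : orderOf x = orderOf y) : y ∈ zpowers x := by
  obtain ⟨-, z, hx, hy⟩ := h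
  have hmem := IsCyclic.mem_zpowers_of_orderOf_eq (a := (⟨x, hx⟩ : zpowers z)) (b := ⟨y, hy⟩)
    (by simpa using hxy)
  obtain ⟨k, hk⟩ := mem_zpowers_iff.mp hmem
  exact mem_zpowers_iff.mpr ⟨k, by simpa using congrArg Subtype.val hk⟩

end enhancedPowerGraph

namespace SimpleGraph

variable {V : Type*} {G : SimpleGraph V}

theorem cliqueNum_lt_of_cliqueFree {n : ℕ} (h : G.CliqueFree n) : G.cliqueNum < n := by
  obtain ⟨s, hs⟩ := G.exists_isNClique_cliqueNum
  by_contra! hn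
  exact h.mono hn s hs

section Pentagon

variable {f : ZMod 5 → V}

theorem eq_add_one_or_of_adj_pentagon (hnadj : ∀ i, ¬ G.Adj (f i) (f (i + 2))) {i j : ZMod 5}
    (h : G.Adj (f i) (f j)) : j = i + 1 ∨ i = j + 1 := by
  obtain ⟨d, rfl⟩ : ∃ d, j = i + d := ⟨j - i, by ring⟩
  have hd : ∀ d : ZMod 5, d = 0 ∨ d = 1 ∨ d = 2 ∨ d = 3 ∨ d = 4 := by decide
  obtain rfl | rfl | rfl | rfl | rfl := hd d
  · exact absurd h (by simp)
  · exact .inl rfl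
  · exact absurd h (hnadj i)
  · have := hnadj (i + 3)
    rw [add_assoc, show (3 + 2 : ZMod 5) = 0 from rfl, add_zero] at this
    exact absurd h.symm this
  · exact .inr (by rw [add_assoc, show (4 + 1 : ZMod 5) = 0 from rfl, add_zero])

theorem cliqueFree_three_induce_range_of_pentagon (hnadj : ∀ i, ¬ G.Adj (f i) (f (i + 2))) :
    (G.induce (Set.range f)).CliqueFree 3 := by
  classical
  intro t ht
  obtain ⟨⟨_, i, rfl⟩, ⟨_, j, rfl⟩, ⟨_, k, rfl⟩, hij, hik, hjk, -⟩ := is3Clique_iff.mp ht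
  have hcyc : ∀ i j k : ZMod 5, (j = i + 1 ∨ i = j + 1) → (k = i + 1 ∨ i = k + 1) →
      (k = j + 1 ∨ j = k + 1) → False := by decide
  exact hcyc i j k (eq_add_one_or_of_adj_pentagon hnadj hij)
    (eq_add_one_or_of_adj_pentagon hnadj hik) (eq_add_one_or_of_adj_pentagon hnadj hjk)

theorem not_colorable_two_induce_range_of_pentagon (hadj : ∀ i, G.Adj (f i) (f (i + 1))) :
    ¬ (G.induce (Set.range f)).Colorable 2 := by
  rintro ⟨C⟩
  have hodd : ∀ c : ZMod 5 → Fin 2, ∃ i, c i = c (i + 1) := by decide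
  obtain ⟨i, hi⟩ := hodd fun i => C ⟨f i, i, rfl⟩
  exact C.valid
    (show (G.induce _).Adj (⟨f i, i, rfl⟩ : Set.range f) ⟨f (i + 1), i + 1, rfl⟩ from hadj i) hi

theorem not_isPerfect_of_pentagon (hadj : ∀ i, G.Adj (f i) (f (i + 1)))
    (hnadj : ∀ i, ¬ G.Adj (f i) (f (i + 2))) : ¬ G.IsPerfect := by
  intro hG
  have hω : (G.induce (Set.range f)).cliqueNum ≤ 2 := Nat.lt_succ_iff.mp <|
    cliqueNum_lt_of_cliqueFree (cliqueFree_three_induce_range_of_pentagon hnadj)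
  refine not_colorable_two_induce_range_of_pentagon hadj ?_
  rw [← chromaticNumber_le_iff_colorable, hG]
  exact_mod_cast hω

end Pentagon

theorem not_isPerfect_of_induced_pentagon {a b c d e : V} (hab : G.Adj a b) (hbc : G.Adj b c)
    (hcd : G.Adj c d) (hde : G.Adj d e) (hea : G.Adj e a) (hac : ¬ G.Adj a c)
    (had : ¬ G.Adj a d) (hbd : ¬ G.Adj b d) (hbe : ¬ G.Adj b e) (hce : ¬ G.Adj c e) :
    ¬ G.IsPerfect := by
  refine not_isPerfect_of_pentagon (f := ![a, b, c, d, e]) (fun i => ?_) (fun i => ?_)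
  · fin_cases i
    exacts [hab, hbc, hcd, hde, hea]
  · fin_cases i
    exacts [hac, hbd, hce, fun h => had h.symm, fun h => hbe h.symm]

end SimpleGraph

section SymmetricGroup

open Equiv enhancedPowerGraph

set_option maxRecDepth 10000 in
theorem orderOf_cycle_01234 : orderOf (c[0, 1, 2, 3, 4] : Perm (Fin 8)) = 5 :=
  have : Fact (Nat.Prime 5) := ⟨Nat.prime_five⟩
  orderOf_eq_prime (by decide) (by decide)

theorem orderOf_cycle_567 : orderOf (c[5, 6, 7] : Perm (Fin 8)) = 3 :=
  orderOf_eq_prime (by decide) (by decide)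

theorem orderOf_cycle_234 : orderOf (c[2, 3, 4] : Perm (Fin 8)) = 3 :=
  orderOf_eq_prime (by decide) (by decide)

theorem orderOf_cycle_01 : orderOf (c[0, 1] : Perm (Fin 8)) = 2 :=
  orderOf_eq_prime (by decide) (by decide)

theorem orderOf_cycle_56 : orderOf (c[5, 6] : Perm (Fin 8)) = 2 :=
  orderOf_eq_prime (by decide) (by decide)

theorem enhancedPowerGraph_perm_fin_eight_pentagon :
    let Γ := enhancedPowerGraph (Perm (Fin 8))
    Γ.Adj c[0, 1, 2, 3, 4] c[5, 6, 7] ∧ Γ.Adj c[5, 6, 7] c[0, 1] ∧ Γ.Adj c[0, 1] c[2, 3, 4] ∧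
      Γ.Adj c[2, 3, 4] c[5, 6] ∧ Γ.Adj c[5, 6] c[0, 1, 2, 3, 4] ∧
      ¬Γ.Adj c[0, 1, 2, 3, 4] c[0, 1] ∧ ¬Γ.Adj c[0, 1, 2, 3, 4] c[2, 3, 4] ∧
      ¬Γ.Adj c[5, 6, 7] c[2, 3, 4] ∧ ¬Γ.Adj c[5, 6, 7] c[5, 6] ∧ ¬Γ.Adj c[0, 1] c[5, 6] := by
  intro Γ
  refine ⟨?ab, ?bc, ?cd, ?de, ?ea, fun h => ?ac, fun h => ?ad, fun h => ?bd, fun h => ?be,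
    fun h => ?ce⟩
  case ac | ad | be => exact absurd (commute_of_adj h).eq (by decide)
  case bd =>
    refine absurd (mem_zpowers_of_adj_of_orderOf_eq h ?_) ?_
    · rw [orderOf_cycle_567, orderOf_cycle_234]
    · rw [mem_zpowers_iff_mem_range_orderOf, orderOf_cycle_567]
      decide
  case ce =>
    refine absurd (mem_zpowers_of_adj_of_orderOf_eq h ?_) ?_
    · rw [orderOf_cycle_01, orderOf_cycle_56]
    · rw [mem_zpowers_iff_mem_range_orderOf, orderOf_cycle_01]
      decide
  all_goals
    refine adj_of_coprime (by decide) ((commute_iff_eq _ _).mpr (by decide)) ?_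
    simp only [orderOf_cycle_01234, orderOf_cycle_567, orderOf_cycle_234, orderOf_cycle_01,
      orderOf_cycle_56]
    decide

end SymmetricGroup

-- Points are `0`-indexed: `c[0, 1, 2, 3, 4]` is the cycle `(1 2 3 4 5)`.
open Equiv in
/-- The permutations `(1 2 3 4 5), (6 7 8), (1 2), (3 4 5), (6 7)` (written here with
`0`-indexed points) induce a pentagon in the enhanced power graph of `S₈`, which is
therefore not perfect. -/
theorem enhanced_S8_not_perfect :
    (let Γ := enhancedPowerGraph (Equiv.Perm (Fin 8))
     let a : Equiv.Perm (Fin 8) := c[0, 1, 2, 3, 4]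
     let b : Equiv.Perm (Fin 8) := c[5, 6, 7]
     let c : Equiv.Perm (Fin 8) := c[0, 1]
     let d : Equiv.Perm (Fin 8) := c[2, 3, 4]
     let e : Equiv.Perm (Fin 8) := c[5, 6]
     Γ.Adj a b ∧ Γ.Adj b c ∧ Γ.Adj c d ∧ Γ.Adj d e ∧ Γ.Adj e a ∧
       ¬Γ.Adj a c ∧ ¬Γ.Adj a d ∧ ¬Γ.Adj b d ∧ ¬Γ.Adj b e ∧ ¬Γ.Adj c e) ∧
    ¬ (enhancedPowerGraph (Equiv.Perm (Fin 8))).IsPerfect := by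
  obtain ⟨hab, hbc, hcd, hde, hea, hac, had, hbd, hbe, hce⟩ :=
    enhancedPowerGraph_perm_fin_eight_pentagon
  exact ⟨⟨hab, hbc, hcd, hde, hea, hac, had, hbd, hbe, hce⟩,
    SimpleGraph.not_isPerfect_of_induced_pentagon hab hbc hcd hde hea hac had hbd hbe hce⟩
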